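/- Property P₁ is stable under iteration: for every 2-process affine task A on n = 3^ℓ (ℓ ≥ 1) and every k ≥ 1, if vertices 0 and n are joined by a path of edges of A, then vertices 0 and n^k are joined by a path of edges of A^{⋆k}. -/

import Mathlib

/-!
2-process affine tasks, modeled combinatorially.
The ℓ-th iterated standard chromatic subdivision of the 1-simplex is the path
graph on vertices `{0, …, n}`, `n = 3^ℓ`, whose edges are the pairs `{i, i+1}`
for `0 ≤ i < n`; vertex `i` has color `i % 2`, vertex `0` is the solo vertex of
process `p₀` and vertex `n` the solo vertex of `p₁`.  An edge `{i, i+1}` is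
encoded by its left endpoint `i`, and a 2-process affine task on `n` is a
nonempty finite set `A : Finset ℕ` of such edges (left endpoints `< n`).
-/

/-- `StepRel A x y`: the vertices `x` and `y` are joined by an edge of `A`
(the edge `{i, i+1}` being encoded by its left endpoint `i`). -/
def StepRel (A : Finset ℕ) (x y : ℕ) : Prop :=
  (y = x + 1 ∧ x ∈ A) ∨ (x = y + 1 ∧ y ∈ A)

/-- `P₁(A)`: the vertices `0` and `n` are joined by a path all of whose edges
lie in `A`. -/
def P1 (n : ℕ) (A : Finset ℕ) : Prop := Relation.ReflTransGen (StepRel A) 0 n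

/-- `P₂(A)`: the edge `{0, 1}` belongs to `A`. -/
def P2 (A : Finset ℕ) : Prop := 0 ∈ A

/-- `P₃(A)`: the edge `{n-1, n}` belongs to `A`. -/
def P3 (n : ℕ) (A : Finset ℕ) : Prop := n - 1 ∈ A

open Classical in
/-- The class of a 2-process affine task `A` on `{0,…,n}`:
`1` if `P₁(A)`; `2` if `¬P₁ ∧ P₂ ∧ P₃`; `3` if `¬P₁ ∧ P₂ ∧ ¬P₃`;
`4` if `¬P₁ ∧ ¬P₂ ∧ P₃`; `5` if `¬P₁ ∧ ¬P₂ ∧ ¬P₃`. -/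
noncomputable def classOf (n : ℕ) (A : Finset ℕ) : ℕ :=
  if P1 n A then 1
  else if P2 A then (if P3 n A then 2 else 3)
  else (if P3 n A then 4 else 5)

/-- The class order `⊑` on `{1, …, 5}`: `c ⊑ c'` iff `c = c'`, or `c = 1`,
or `c' = 5`, or (`c = 2` and `c' ∈ {3, 4}`). -/
def ClassLE (c c' : ℕ) : Prop :=
  c = c' ∨ c = 1 ∨ c' = 5 ∨ (c = 2 ∧ (c' = 3 ∨ c' = 4))

/-- The composition `A ⋆ B` of a task `A` on `{0,…,n}` with a task `B` on
`{0,…,m}`: each edge of `A` is replaced by an appropriately oriented copy of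
`B`; its edges are `{i·m + r, i·m + r + 1}` for `{i, i+1} ∈ A` and
`{j, j+1} ∈ B`, where `r = j` if `i` is even and `r = m - 1 - j` if `i` is odd
(edges encoded by left endpoints). -/
def comp (m : ℕ) (A B : Finset ℕ) : Finset ℕ :=
  (A ×ˢ B).image fun p => p.1 * m + (if Even p.1 then p.2 else m - 1 - p.2)

/-- `iterTask n A k` is the iterate `A^{⋆k}` (for `k ≥ 1`) of a task `A` on
`{0,…,n}`, a task on `{0,…,n^k}`: `A^{⋆1} = A`, `A^{⋆(k+1)} = A^{⋆k} ⋆ A`.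
(The value at `k = 0` is irrelevant and set to `A`.) -/
def iterTask (n : ℕ) (A : Finset ℕ) : ℕ → Finset ℕ
  | 0 => A
  | 1 => A
  | k + 2 => comp n (iterTask n A (k + 1)) A

/-- A chromatic carrier-preserving simplicial map `δ` from a task `A` on
`{0,…,n}` to the subdivided 1-simplex on `{0,…,m}`: `δ` maps `{0,…,n}` to
`{0,…,m}`; `δ i ≡ i (mod 2)` for every vertex incident to an edge of `A`;
`|δ (i+1) - δ i| = 1` for every edge `{i, i+1} ∈ A`; `δ 0 = 0` whenever
`{0,1} ∈ A`; and `δ n = m` whenever `{n-1, n} ∈ A`. -/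
def IsCCMap (n m : ℕ) (A : Finset ℕ) (δ : ℕ → ℕ) : Prop :=
  (∀ i ≤ n, δ i ≤ m) ∧
  (∀ i ∈ A, δ i % 2 = i % 2 ∧ δ (i + 1) % 2 = (i + 1) % 2) ∧
  (∀ i ∈ A, δ (i + 1) = δ i + 1 ∨ δ i = δ (i + 1) + 1) ∧
  (0 ∈ A → δ 0 = 0) ∧
  (n - 1 ∈ A → δ n = m)

/-- The image task `δ(A) = { {δ i, δ (i+1)} : {i, i+1} ∈ A }`
(edges encoded by left endpoints, i.e. by `min (δ i) (δ (i+1))`). -/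
def imageTask (A : Finset ℕ) (δ : ℕ → ℕ) : Finset ℕ :=
  A.image fun i => min (δ i) (δ (i + 1))

/-- `Solves m n B A`: the affine model `B*` of a task `B` on `{0,…,m}` solves
the task `A` on `{0,…,n}`, i.e. there exist `k ≥ 1` and a chromatic
carrier-preserving simplicial map `δ` from `B^{⋆k}` (a task on `{0,…,m^k}`)
to the subdivided 1-simplex on `{0,…,n}` with `δ(B^{⋆k}) ⊆ A`. -/
def Solves (m n : ℕ) (B A : Finset ℕ) : Prop :=
  ∃ k, 1 ≤ k ∧ ∃ δ : ℕ → ℕ,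
    IsCCMap (m ^ k) n (iterTask m B k) δ ∧ imageTask (iterTask m B k) δ ⊆ A


/-!
In `A ⋆ B` every edge `{i, i+1}` of `A` is replaced by a copy of `B` spanning `[i·m, (i+1)·m]`,
translated when `i` is even and reflected when `i` is odd. Either way a path from `0` to `m` in `B`
becomes a path between `i·m` and `(i+1)·m`, so a path from `0` to `n` in `A` lifts to a path from
`0` to `n·m` in `A ⋆ B`; induction on `k` finishes the proof.
-/

open Relation

instance (A : Finset ℕ) : Std.Symm (StepRel A) where
  symm _ _ h := h.symm

lemma mem_comp {m : ℕ} {A B : Finset ℕ} {i j : ℕ} (hi : i ∈ A) (hj : j ∈ B) :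
    i * m + (if Even i then j else m - 1 - j) ∈ comp m A B :=
  Finset.mem_image.2 ⟨(i, j), Finset.mem_product.2 ⟨hi, hj⟩, rfl⟩

section Block

variable {m : ℕ} {A B : Finset ℕ} {i : ℕ}

lemma stepRel_comp_of_even (hi : i ∈ A) (heven : Even i) {a b : ℕ} (h : StepRel B a b) :
    StepRel (comp m A B) (i * m + a) (i * m + b) := by
  rcases h with ⟨rfl, ha⟩ | ⟨rfl, hb⟩
  · exact Or.inl ⟨rfl, by simpa [heven] using mem_comp (m := m) hi ha⟩
  · exact Or.inr ⟨rfl, by simpa [heven] using mem_comp (m := m) hi hb⟩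

-- `j < m` keeps `m - 1 - j` from truncating, so the reflection `x ↦ m - x` sends edge `j` of `B`
-- to edge `m - 1 - j`.
lemma stepRel_comp_of_odd (hi : i ∈ A) (hodd : ¬Even i) (hB : ∀ j ∈ B, j < m) {a b : ℕ}
    (h : StepRel B a b) : StepRel (comp m A B) (i * m + (m - a)) (i * m + (m - b)) := by
  rcases h with ⟨rfl, ha⟩ | ⟨rfl, hb⟩
  · have hlt := hB a ha
    refine Or.inr ⟨by omega, ?_⟩
    have hmem := mem_comp (m := m) hi ha
    rw [if_neg hodd] at hmem
    rwa [show m - (a + 1) = m - 1 - a by omega]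
  · have hlt := hB b hb
    refine Or.inl ⟨by omega, ?_⟩
    have hmem := mem_comp (m := m) hi hb
    rw [if_neg hodd] at hmem
    rwa [show m - (b + 1) = m - 1 - b by omega]

lemma reflTransGen_comp_block (hB : ∀ j ∈ B, j < m) (hPB : P1 m B) (hi : i ∈ A) :
    ReflTransGen (StepRel (comp m A B)) (i * m) ((i + 1) * m) := by
  by_cases heven : Even i
  · have hpath := ReflTransGen.lift (fun x => i * m + x)
      (fun _ _ => stepRel_comp_of_even hi heven) _ _ hPB
    simpa [Function.onFun, add_mul] using hpath
  · have hpath := ReflTransGen.lift (fun x => i * m + (m - x))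
      (fun _ _ => stepRel_comp_of_odd hi heven hB) _ _ hPB
    simp only [Function.onFun, Nat.sub_self, Nat.sub_zero, add_zero] at hpath
    simpa [add_mul] using Std.Symm.symm _ _ hpath

end Block

lemma reflTransGen_comp {m : ℕ} {A B : Finset ℕ} (hB : ∀ j ∈ B, j < m) (hPB : P1 m B)
    {x y : ℕ} (h : ReflTransGen (StepRel A) x y) :
    ReflTransGen (StepRel (comp m A B)) (x * m) (y * m) := by
  induction h with
  | refl => rfl
  | tail _ hstep ih =>
    rcases hstep with ⟨rfl, hi⟩ | ⟨rfl, hi⟩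
    · exact ih.trans (reflTransGen_comp_block hB hPB hi)
    · exact ih.trans (Std.Symm.symm _ _ (reflTransGen_comp_block hB hPB hi))

lemma P1_comp {n m : ℕ} {A B : Finset ℕ} (hA : P1 n A) (hB : ∀ j ∈ B, j < m) (hPB : P1 m B) :
    P1 (n * m) (comp m A B) := by
  simpa [P1] using reflTransGen_comp hB hPB hA

lemma iterTask_succ (n : ℕ) (A : Finset ℕ) {k : ℕ} (hk : 1 ≤ k) :
    iterTask n A (k + 1) = comp n (iterTask n A k) A := by
  obtain ⟨k, rfl⟩ := Nat.exists_eq_add_of_le' hk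
  rfl

theorem P1_stable_iter_general
    (n : ℕ)
    (A : Finset ℕ) (hlt : ∀ i ∈ A, i < n)
    (k : ℕ) (hk : 1 ≤ k) (hA : P1 n A) :
    P1 (n ^ k) (iterTask n A k) := by
  induction k, hk using Nat.le_induction with
  | base => simpa [iterTask] using hA
  | succ k hk ih =>
    rw [iterTask_succ n A hk, pow_succ]
    exact P1_comp ih hlt hA

/-- `P₁` is stable under iteration: for every 2-process affine task `A` on
`n = 3^ℓ` (`ℓ ≥ 1`) and every `k ≥ 1`, if `0` and `n` are joined by a path of
edges of `A`, then `0` and `n^k` are joined by a path of edges of `A^{⋆k}`. -/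
theorem P1_stable_iter
    (ℓ n : ℕ) (hℓ : 1 ≤ ℓ) (hn : n = 3 ^ ℓ)
    (A : Finset ℕ) (hne : A.Nonempty) (hlt : ∀ i ∈ A, i < n)
    (k : ℕ) (hk : 1 ≤ k) (hA : P1 n A) :
    P1 (n ^ k) (iterTask n A k) :=
  P1_stable_iter_general n A hlt k hk hA
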